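/- arXiv:2401.16060 — 2 statements merged into one kernel-verified Lean document; each statement's English description precedes it below -/
import Mathlib

section
/- Let Γ ⊆ Γ' be closed subspaces of a complex Hilbert space Ĥ, β = Γ' ∩ Γ^⊥, L a closed subspace of β, and M a closed subspace of Ĥ. (i) If (L + Γ) + M is closed in Ĥ, then L + γ_!M is closed in β. (ii) If L + γ_!M is closed in β and Γ' + M is closed in Ĥ, then (L + Γ) + M is closed in Ĥ and there is a canonical linear isomorphism (Γ' + M)/((L + Γ) + M) ≅ β/(L + γ_!M); in particular there is a short exact sequence 0 → Ĥ/(Γ' + M) → Ĥ/((L + Γ) + M) → β/(L + γ_!M) → 0. -/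
noncomputable section

open Classical in
/-- Orthogonal projection onto a closed (complete) submodule, as a continuous linear map
on the ambient space (defined to be `0` on non-complete submodules). -/
noncomputable def orthProj {W : Type*} [NormedAddCommGroup W] [InnerProductSpace ℂ W]
    (M : Submodule ℂ W) : W →L[ℂ] W :=
  if h : IsComplete (M : Set W) then
    haveI : CompleteSpace M := h.completeSpace_coe
    M.subtypeL.comp (Submodule.orthogonalProjectionOnto M)
  else 0

/-- `(M, N)` is a Fredholm pair of subspaces of `W`: the sum is closed, the intersection
is finite-dimensional and the sum has finite codimension. -/
def FredholmPair {W : Type*} [NormedAddCommGroup W] [InnerProductSpace ℂ W]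
    (M N : Submodule ℂ W) : Prop :=
  IsClosed ((M ⊔ N : Submodule ℂ W) : Set W) ∧
  FiniteDimensional ℂ ↥(M ⊓ N) ∧
  FiniteDimensional ℂ (W ⧸ (M ⊔ N))

/-- `(M, N)` is a transversal pair of subspaces of `W`. -/
def TransversalPair {W : Type*} [NormedAddCommGroup W] [InnerProductSpace ℂ W]
    (M N : Submodule ℂ W) : Prop :=
  M ⊓ N = ⊥ ∧ M ⊔ N = ⊤

/-- `(L, N)` is a Fredholm pair of subspaces of the subspace `β` of `W` (the codimension
is computed inside `β`). -/
def FredholmPairIn {W : Type*} [NormedAddCommGroup W] [InnerProductSpace ℂ W]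
    (β L N : Submodule ℂ W) : Prop :=
  IsClosed ((L ⊔ N : Submodule ℂ W) : Set W) ∧
  FiniteDimensional ℂ ↥(L ⊓ N) ∧
  FiniteDimensional ℂ (↥β ⧸ Submodule.comap β.subtype (L ⊔ N))

/-- `(L, N)` is a transversal pair of subspaces of the subspace `β` of `W`. -/
def TransversalPairIn {W : Type*} [NormedAddCommGroup W] [InnerProductSpace ℂ W]
    (β L N : Submodule ℂ W) : Prop :=
  L ⊓ N = ⊥ ∧ L ⊔ N = β

/-- The push-forward `γ_!M = γ(M ∩ Γ')`, where `β = Γ' ∩ Γ^⊥` and `γ` is the restriction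
to `Γ'` of the orthogonal projection onto `β`. -/
def gammaPush {W : Type*} [NormedAddCommGroup W] [InnerProductSpace ℂ W]
    (Γ Γ' M : Submodule ℂ W) : Submodule ℂ W :=
  (M ⊓ Γ').map (orthProj (Γ' ⊓ Γᗮ) : W →ₗ[ℂ] W)

/-- `M` is Fredholm with respect to `(Γ, Γ')`: the pair `(M, Γ)` is lower semi-Fredholm
and the pair `(M, Γ')` is upper semi-Fredholm. -/
def FredholmWrt {W : Type*} [NormedAddCommGroup W] [InnerProductSpace ℂ W]
    (Γ Γ' M : Submodule ℂ W) : Prop :=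
  (IsClosed ((M ⊔ Γ : Submodule ℂ W) : Set W) ∧ FiniteDimensional ℂ ↥(M ⊓ Γ)) ∧
  (IsClosed ((M ⊔ Γ' : Submodule ℂ W) : Set W) ∧ FiniteDimensional ℂ (W ⧸ (M ⊔ Γ')))

/-- `M` is transversal to `(Γ, Γ')`: `M + Γ` is closed, `M ∩ Γ = 0` and `M + Γ' = W`. -/
def TransversalWrt {W : Type*} [NormedAddCommGroup W] [InnerProductSpace ℂ W]
    (Γ Γ' M : Submodule ℂ W) : Prop :=
  IsClosed ((M ⊔ Γ : Submodule ℂ W) : Set W) ∧ M ⊓ Γ = ⊥ ∧ M ⊔ Γ' = ⊤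

section OrthProjHelpers

variable {W : Type*} [NormedAddCommGroup W] [InnerProductSpace ℂ W] [CompleteSpace W]

lemma orthProj_eq_of {N : Submodule ℂ W} (hN : IsClosed (N : Set W)) {x v : W}
    (hv : v ∈ N) (hxv : x - v ∈ Nᗮ) : orthProj N x = v := by
  have hc : IsComplete (N : Set W) := hN.isComplete
  haveI : CompleteSpace N := hc.completeSpace_coe
  unfold orthProj
  rw [dif_pos hc]
  exact Submodule.eq_starProjection_of_mem_orthogonal hv hxv

lemma orthProj_mem {N : Submodule ℂ W} (hN : IsClosed (N : Set W)) (x : W) :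
    orthProj N x ∈ N := by
  have hc : IsComplete (N : Set W) := hN.isComplete
  haveI : CompleteSpace N := hc.completeSpace_coe
  unfold orthProj
  rw [dif_pos hc]
  exact (Submodule.orthogonalProjectionOnto N x).2

lemma orthProj_sub_mem {N : Submodule ℂ W} (hN : IsClosed (N : Set W)) (x : W) :
    x - orthProj N x ∈ Nᗮ := by
  have hc : IsComplete (N : Set W) := hN.isComplete
  haveI : CompleteSpace N := hc.completeSpace_coe
  unfold orthProj
  rw [dif_pos hc]
  exact Submodule.sub_starProjection_mem_orthogonal x

lemma orthProj_eq_self {N : Submodule ℂ W} (hN : IsClosed (N : Set W)) {x : W}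
    (hx : x ∈ N) : orthProj N x = x :=
  orthProj_eq_of hN hx (by simpa using zero_mem Nᗮ)

lemma orthProj_eq_zero {N : Submodule ℂ W} (hN : IsClosed (N : Set W)) {x : W}
    (hx : x ∈ Nᗮ) : orthProj N x = 0 :=
  orthProj_eq_of hN (zero_mem N) (by simpa using hx)

end OrthProjHelpers

/-- with `β = Γ' ∩ Γ^⊥`, for a closed `L ⊆ β` and a closed subspace `M`:
(i) if `(L + Γ) + M` is closed then `L + γ_!M` is closed; (ii) if `L + γ_!M` is closed
and `Γ' + M` is closed, then `(L + Γ) + M` is closed and there is a canonical isomorphism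
`(Γ' + M)/((L + Γ) + M) ≅ β/(L + γ_!M)`. -/
theorem statement_10
    {W : Type*} [NormedAddCommGroup W] [InnerProductSpace ℂ W] [CompleteSpace W]
    (Γ Γ' L M : Submodule ℂ W)
    (hΓ : IsClosed ((Γ : Submodule ℂ W) : Set W))
    (hΓ' : IsClosed ((Γ' : Submodule ℂ W) : Set W))
    (hle : Γ ≤ Γ')
    (hL : IsClosed ((L : Submodule ℂ W) : Set W)) (hLβ : L ≤ Γ' ⊓ Γᗮ)
    (hM : IsClosed ((M : Submodule ℂ W) : Set W)) :
    (IsClosed (((L ⊔ Γ) ⊔ M : Submodule ℂ W) : Set W) →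
      IsClosed ((L ⊔ gammaPush Γ Γ' M : Submodule ℂ W) : Set W)) ∧
    (IsClosed ((L ⊔ gammaPush Γ Γ' M : Submodule ℂ W) : Set W) →
      IsClosed ((Γ' ⊔ M : Submodule ℂ W) : Set W) →
      IsClosed (((L ⊔ Γ) ⊔ M : Submodule ℂ W) : Set W) ∧
      Nonempty
        ((↥(Γ' ⊔ M) ⧸ Submodule.comap (Γ' ⊔ M).subtype ((L ⊔ Γ) ⊔ M)) ≃ₗ[ℂ]
          (↥(Γ' ⊓ Γᗮ) ⧸
            Submodule.comap (Γ' ⊓ Γᗮ).subtype (L ⊔ gammaPush Γ Γ' M)))) := by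
  -- Notation
  have hβc : IsClosed ((Γ' ⊓ Γᗮ : Submodule ℂ W) : Set W) := by
    rw [Submodule.coe_inf]
    exact hΓ'.inter Γ.isClosed_orthogonal
  have hβle : Γ ≤ (Γ' ⊓ Γᗮ)ᗮ :=
    le_trans Γ.le_orthogonal_orthogonal (Submodule.orthogonal_le inf_le_right)
  have hLΓ' : L ≤ Γ' := hLβ.trans inf_le_left
  -- decomposition of elements of Γ'
  have hdecomp : ∀ x ∈ Γ', orthProj (Γ' ⊓ Γᗮ) x = x - orthProj Γ x := by
    intro x hx
    refine orthProj_eq_of hβc ?_ ?_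
    · exact ⟨Submodule.sub_mem _ hx (hle (orthProj_mem hΓ x)), orthProj_sub_mem hΓ x⟩
    · have : x - (x - orthProj Γ x) = orthProj Γ x := by abel
      rw [this]
      exact hβle (orthProj_mem hΓ x)
  -- the key membership characterization
  have key : ∀ x ∈ Γ', ∀ m ∈ M,
      (x + m ∈ (L ⊔ Γ) ⊔ M ↔ orthProj (Γ' ⊓ Γᗮ) x ∈ L ⊔ gammaPush Γ Γ' M) := by
    intro x hx m hm
    constructor
    · intro h
      rcases Submodule.mem_sup.1 h with ⟨y, hy, m₁, hm₁, hsum⟩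
      rcases Submodule.mem_sup.1 hy with ⟨l, hl, g, hg, rfl⟩
      have hxeq : x = l + g + (m₁ - m) := by
        rw [show l + g + (m₁ - m) = l + g + m₁ - m by abel, hsum]; abel
      have hm₂ : m₁ - m ∈ M ⊓ Γ' := by
        refine ⟨Submodule.sub_mem _ hm₁ hm, ?_⟩
        have : m₁ - m = x - l - g := by rw [hxeq]; abel
        rw [this]
        exact Submodule.sub_mem _ (Submodule.sub_mem _ hx (hLΓ' hl)) (hle hg)
      have hPx : orthProj (Γ' ⊓ Γᗮ) x = l + orthProj (Γ' ⊓ Γᗮ) (m₁ - m) := by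
        rw [hxeq, map_add, map_add, orthProj_eq_self hβc (hLβ hl),
          orthProj_eq_zero hβc (hβle hg), add_zero]
      rw [hPx]
      exact Submodule.add_mem_sup hl ⟨m₁ - m, hm₂, rfl⟩
    · intro h
      rcases Submodule.mem_sup.1 h with ⟨l, hl, z, hz, hsum⟩
      rcases hz with ⟨m₀, hm₀, rfl⟩
      have e1 : orthProj (Γ' ⊓ Γᗮ) x = x - orthProj Γ x := hdecomp x hx
      have e2 : orthProj (Γ' ⊓ Γᗮ) m₀ = m₀ - orthProj Γ m₀ := hdecomp m₀ hm₀.2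
      have h' : x - orthProj Γ x = l + (m₀ - orthProj Γ m₀) := by
        rw [ContinuousLinearMap.coe_coe] at hsum; rw [← e1, ← e2, hsum]
      have hx' : x = (l + (m₀ - orthProj Γ m₀)) + orthProj Γ x := by
        rw [← h']; abel
      have hfinal : x + m = (l + (orthProj Γ x - orthProj Γ m₀)) + (m₀ + m) := by
        conv_lhs => rw [hx']
        abel
      rw [hfinal]
      refine Submodule.add_mem _ (Submodule.add_mem _ ?_ ?_) ?_
      · exact Submodule.mem_sup_left (Submodule.mem_sup_left hl)
      · exact Submodule.mem_sup_left (Submodule.mem_sup_right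
          (Submodule.sub_mem _ (orthProj_mem hΓ x) (orthProj_mem hΓ m₀)))
      · exact Submodule.mem_sup_right (Submodule.add_mem _ hm₀.1 hm)
  -- part (i): the identity  L ⊔ γ_!M = ((L ⊔ Γ) ⊔ M) ⊓ β
  have hTeq : L ⊔ gammaPush Γ Γ' M = ((L ⊔ Γ) ⊔ M) ⊓ (Γ' ⊓ Γᗮ) := by
    apply le_antisymm
    · refine sup_le (le_inf (le_sup_left.trans le_sup_left) hLβ) ?_
      rintro z ⟨m₀, hm₀, rfl⟩
      refine ⟨?_, orthProj_mem hβc m₀⟩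
      rw [ContinuousLinearMap.coe_coe, hdecomp m₀ hm₀.2]
      exact Submodule.sub_mem _ (Submodule.mem_sup_right hm₀.1)
        (Submodule.mem_sup_left (Submodule.mem_sup_right (orthProj_mem hΓ m₀)))
    · rintro x ⟨hxS, hxβ⟩
      have hx' : x + 0 ∈ (L ⊔ Γ) ⊔ M := by simpa using hxS
      have := (key x hxβ.1 0 (zero_mem M)).1 hx'
      rwa [orthProj_eq_self hβc hxβ] at this
  constructor
  · intro hS
    rw [hTeq, Submodule.coe_inf]
    exact hS.inter hβc
  -- part (ii)
  intro hT hV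
  haveI iΓ' : CompleteSpace ↥Γ' := hΓ'.completeSpace_coe
  haveI iM : CompleteSpace ↥M := hM.completeSpace_coe
  haveI iV : CompleteSpace ↥(Γ' ⊔ M) := hV.completeSpace_coe
  -- the sum map  Γ' × M → Γ' ⊔ M
  let pL : (↥Γ' × ↥M) →L[ℂ] ↥(Γ' ⊔ M) :=
    { toFun := fun q => ⟨(q.1 : W) + (q.2 : W), Submodule.add_mem_sup q.1.2 q.2.2⟩
      map_add' := fun a b => by
        ext; simp only [Prod.fst_add, Prod.snd_add, Submodule.coe_add]; abel
      map_smul' := fun c a => by ext; simp [smul_add]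
      cont := by
        apply Continuous.subtype_mk
        exact ((continuous_subtype_val.comp continuous_fst).add
          (continuous_subtype_val.comp continuous_snd)) }
  have hsurj : Function.Surjective pL := by
    rintro ⟨v, hv⟩
    rcases Submodule.mem_sup.1 hv with ⟨x, hx, m, hm, hsum⟩
    exact ⟨(⟨x, hx⟩, ⟨m, hm⟩), Subtype.ext hsum⟩
  have hmemiff : ∀ q : ↥Γ' × ↥M,
      ((pL q : W) ∈ (L ⊔ Γ) ⊔ M ↔
        orthProj (Γ' ⊓ Γᗮ) (q.1 : W) ∈ L ⊔ gammaPush Γ Γ' M) :=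
    fun q => key q.1 q.1.2 q.2 q.2.2
  -- closedness of (L ⊔ Γ) ⊔ M
  have hSV : (L ⊔ Γ) ⊔ M ≤ Γ' ⊔ M :=
    sup_le (sup_le (hLΓ'.trans le_sup_left) (hle.trans le_sup_left)) le_sup_right
  have hK : IsClosed {q : ↥Γ' × ↥M |
      orthProj (Γ' ⊓ Γᗮ) (q.1 : W) ∈ L ⊔ gammaPush Γ Γ' M} := by
    have : {q : ↥Γ' × ↥M | orthProj (Γ' ⊓ Γᗮ) (q.1 : W) ∈ L ⊔ gammaPush Γ Γ' M} =
        (fun q : ↥Γ' × ↥M => orthProj (Γ' ⊓ Γᗮ) (q.1 : W)) ⁻¹'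
          ((L ⊔ gammaPush Γ Γ' M : Submodule ℂ W) : Set W) := rfl
    rw [this]
    exact hT.preimage ((orthProj (Γ' ⊓ Γᗮ)).continuous.comp
      (continuous_subtype_val.comp continuous_fst))
  have hcompl : (Subtype.val ⁻¹' (((L ⊔ Γ) ⊔ M : Submodule ℂ W) : Set W) :
      Set ↥(Γ' ⊔ M))ᶜ = pL '' {q : ↥Γ' × ↥M |
        orthProj (Γ' ⊓ Γᗮ) (q.1 : W) ∈ L ⊔ gammaPush Γ Γ' M}ᶜ := by
    ext v
    simp only [Set.mem_compl_iff, Set.mem_preimage, Set.mem_image, Set.mem_setOf_eq]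
    constructor
    · intro h
      obtain ⟨q, rfl⟩ := hsurj v
      exact ⟨q, fun hq => h ((hmemiff q).2 hq), rfl⟩
    · rintro ⟨q, hq, rfl⟩ h
      exact hq ((hmemiff q).1 h)
  have hclosedV : IsClosed (Subtype.val ⁻¹' (((L ⊔ Γ) ⊔ M : Submodule ℂ W) : Set W) :
      Set ↥(Γ' ⊔ M)) := by
    rw [← isOpen_compl_iff, hcompl]
    exact (pL.isOpenMap hsurj) _ hK.isOpen_compl
  have hSclosed : IsClosed (((L ⊔ Γ) ⊔ M : Submodule ℂ W) : Set W) := by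
    have him : (((L ⊔ Γ) ⊔ M : Submodule ℂ W) : Set W) =
        Subtype.val '' (Subtype.val ⁻¹' (((L ⊔ Γ) ⊔ M : Submodule ℂ W) : Set W) :
          Set ↥(Γ' ⊔ M)) := by
      rw [Set.image_preimage_eq_inter_range, Subtype.range_val]
      exact (Set.inter_eq_left.mpr hSV).symm
    rw [him]
    exact hV.isClosedEmbedding_subtypeVal.isClosedMap _ hclosedV
  refine ⟨hSclosed, ?_⟩
  -- the isomorphism
  let pₗ : (↥Γ' × ↥M) →ₗ[ℂ] ↥(Γ' ⊔ M) := (pL : (↥Γ' × ↥M) →ₗ[ℂ] ↥(Γ' ⊔ M))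
  have hsurjₗ : Function.Surjective pₗ := hsurj
  let T' := Submodule.comap (Γ' ⊓ Γᗮ).subtype (L ⊔ gammaPush Γ Γ' M)
  let r : (↥Γ' × ↥M) →ₗ[ℂ] ↥(Γ' ⊓ Γᗮ) :=
    { toFun := fun q => ⟨orthProj (Γ' ⊓ Γᗮ) (q.1 : W), orthProj_mem hβc _⟩
      map_add' := fun a b => by ext; push_cast; simp
      map_smul' := fun c a => by ext; push_cast; simp }
  let ψ : (↥Γ' × ↥M) →ₗ[ℂ] (↥(Γ' ⊓ Γᗮ) ⧸ T') := T'.mkQ ∘ₗ r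
  have hψ_zero : ∀ q : ↥Γ' × ↥M,
      (ψ q = 0 ↔ orthProj (Γ' ⊓ Γᗮ) (q.1 : W) ∈ L ⊔ gammaPush Γ Γ' M) := by
    intro q
    rw [show ψ q = Submodule.Quotient.mk (r q) from rfl, Submodule.Quotient.mk_eq_zero]
    exact Iff.rfl
  have hker : LinearMap.ker pₗ ≤ LinearMap.ker ψ := by
    intro q hq
    have hq0 : (q.1 : W) + (q.2 : W) = 0 := congrArg Subtype.val hq
    have hx : (q.1 : W) ∈ M ⊓ Γ' := by
      refine ⟨?_, q.1.2⟩
      have : (q.1 : W) = -(q.2 : W) := by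
        rw [eq_neg_iff_add_eq_zero]; exact hq0
      rw [this]
      exact Submodule.neg_mem _ q.2.2
    rw [LinearMap.mem_ker, hψ_zero]
    exact Submodule.mem_sup_right ⟨(q.1 : W), hx, rfl⟩
  let e := pₗ.quotKerEquivOfSurjective hsurjₗ
  let φ : ↥(Γ' ⊔ M) →ₗ[ℂ] (↥(Γ' ⊓ Γᗮ) ⧸ T') :=
    ((LinearMap.ker pₗ).liftQ ψ hker) ∘ₗ e.symm.toLinearMap
  have he : ∀ q : ↥Γ' × ↥M, e (Submodule.Quotient.mk q) = pₗ q := fun q => rfl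
  have hφp : ∀ q : ↥Γ' × ↥M, φ (pₗ q) = ψ q := by
    intro q
    have h1 : e.symm (pₗ q) = Submodule.Quotient.mk q := by
      apply e.injective; rw [LinearEquiv.apply_symm_apply, he]
    show ((LinearMap.ker pₗ).liftQ ψ hker) (e.symm (pₗ q)) = ψ q
    rw [h1, Submodule.liftQ_apply]
  have hkerφ : LinearMap.ker φ =
      Submodule.comap (Γ' ⊔ M).subtype ((L ⊔ Γ) ⊔ M) := by
    ext v
    obtain ⟨q, rfl⟩ := hsurjₗ v
    rw [LinearMap.mem_ker, hφp, Submodule.mem_comap, hψ_zero]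
    exact ((hmemiff q)).symm
  have hφsurj : Function.Surjective φ := by
    intro c
    obtain ⟨b, rfl⟩ := Submodule.Quotient.mk_surjective T' c
    refine ⟨pₗ (⟨(b : W), b.2.1⟩, 0), ?_⟩
    rw [hφp]
    show Submodule.Quotient.mk (r _) = Submodule.Quotient.mk b
    congr 1
    ext
    exact orthProj_eq_self hβc b.2
  exact ⟨(Submodule.quotEquivOfEq _ _ hkerφ.symm).trans
    (φ.quotKerEquivOfSurjective hφsurj)⟩
end
end

section
/- Let M and Γ ⊆ Γ' be closed subspaces of a complex Hilbert space Ĥ. Then M is Fredholm with respect to (Γ,Γ') if and only if there exists a closed subspace N of Ĥ with Γ ⊆ N ⊆ Γ' such that (M,N) is a Fredholm pair. Similarly, M is transversal to (Γ,Γ') if and only if there exists a closed subspace N of Ĥ with Γ ⊆ N ⊆ Γ' such that (M,N) is a transversal pair. -/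
noncomputable section

section AuxStatement13

variable {W : Type*} [NormedAddCommGroup W] [InnerProductSpace ℂ W] [CompleteSpace W]

/-- Preimage under the quotient map of a finite-dimensional submodule of the quotient
by a closed submodule is closed. -/
lemma aux_comap_mkQ_isClosed (p : Submodule ℂ W) (hp : IsClosed (p : Set W))
    (S : Submodule ℂ (W ⧸ p)) (hS : FiniteDimensional ℂ S) :
    IsClosed ((S.comap p.mkQ : Submodule ℂ W) : Set W) := by
  haveI : IsClosed (p : Set W) := hp
  haveI := hS
  have hcont : Continuous p.mkQ :=
    (AddSubgroup.normedMk p.toAddSubgroup).continuous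
  have hSc : IsClosed (S : Set (W ⧸ p)) := S.closed_of_finiteDimensional
  exact hSc.preimage hcont

lemma aux_isClosed_sup_findim (p F : Submodule ℂ W) (hp : IsClosed (p : Set W))
    (hF : FiniteDimensional ℂ F) :
    IsClosed ((p ⊔ F : Submodule ℂ W) : Set W) := by
  haveI := hF
  have h1 : p ⊔ F = (F.map p.mkQ).comap p.mkQ := by
    rw [Submodule.comap_map_eq, Submodule.ker_mkQ, sup_comm]
  rw [h1]
  exact aux_comap_mkQ_isClosed p hp _ (Module.Finite.map F p.mkQ)

lemma aux_isClosed_of_le (p q : Submodule ℂ W) (hpq : p ≤ q) (hp : IsClosed (p : Set W))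
    (hfd : FiniteDimensional ℂ (W ⧸ p)) :
    IsClosed ((q : Submodule ℂ W) : Set W) := by
  haveI := hfd
  have h1 : q = (q.map p.mkQ).comap p.mkQ := by
    rw [Submodule.comap_map_eq, Submodule.ker_mkQ, sup_eq_left.2 hpq]
  rw [h1]
  exact aux_comap_mkQ_isClosed p hp _ inferInstance

lemma aux_findim_quotient (p q : Submodule ℂ W) (h : p ≤ q)
    (hfd : FiniteDimensional ℂ (W ⧸ p)) : FiniteDimensional ℂ (W ⧸ q) := by
  haveI := hfd
  have hsurj : Function.Surjective (Submodule.mapQ p q LinearMap.id h) := by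
    intro x
    obtain ⟨y, rfl⟩ := q.mkQ_surjective x
    exact ⟨p.mkQ y, by simp [Submodule.mapQ_apply]⟩
  exact Module.Finite.of_surjective _ hsurj

set_option linter.unusedSectionVars false

lemma aux_isClosed_sup_of_isCompl (M N Γ : Submodule ℂ W)
    (hM : IsClosed (M : Set W)) (hN : IsClosed (N : Set W)) (hΓ : IsClosed (Γ : Set W))
    (hΓN : Γ ≤ N) (hc : IsCompl M N) :
    IsClosed ((M ⊔ Γ : Submodule ℂ W) : Set W) := by
  set P : W →L[ℂ] N := N.linearProjOfClosedCompl M hc.symm hN hM with hP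
  have hPcoe : ⇑P = N.projectionOnto M hc.symm :=
    Submodule.coe_continuous_linearProjOfClosedCompl' hc.symm hN hM
  have key : ((M ⊔ Γ : Submodule ℂ W) : Set W) = ⇑P ⁻¹' (Subtype.val ⁻¹' (Γ : Set W)) := by
    ext x
    simp only [Set.mem_preimage, SetLike.mem_coe]
    constructor
    · intro hx
      obtain ⟨m, hm, g, hg, rfl⟩ := Submodule.mem_sup.1 hx
      have h1 : P (m + g) = ⟨g, hΓN hg⟩ := by
        rw [hPcoe] at *
        rw [map_add, Submodule.projectionOnto_apply_of_mem_right hc.symm hm, zero_add]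
        exact Submodule.projectionOnto_apply_left hc.symm ⟨g, hΓN hg⟩
      rw [h1]
      exact hg
    · intro hPx
      have h2 : x - (P x : W) ∈ M := by
        rw [← Submodule.linearProjOfIsCompl_ker (q := M) hc.symm]
        rw [LinearMap.mem_ker]
        simp only [map_sub, hPcoe, Submodule.projectionOnto_apply_left, sub_self]
      exact Submodule.mem_sup.2 ⟨x - (P x : W), h2, (P x : W), hPx, by abel⟩
  rw [key]
  exact ((hΓ.preimage continuous_subtype_val).preimage P.continuous)

lemma aux_isClosed_sup (M N Γ : Submodule ℂ W)
    (hM : IsClosed (M : Set W)) (hN : IsClosed (N : Set W)) (hΓ : IsClosed (Γ : Set W))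
    (hΓN : Γ ≤ N) (hd : M ⊓ N = ⊥)
    (hMN : IsClosed ((M ⊔ N : Submodule ℂ W) : Set W)) :
    IsClosed ((M ⊔ Γ : Submodule ℂ W) : Set W) := by
  set V : Submodule ℂ W := M ⊔ N with hV
  haveI : CompleteSpace V := hMN.completeSpace_coe
  set M' : Submodule ℂ V := M.comap V.subtype with hM'
  set N' : Submodule ℂ V := N.comap V.subtype with hN'
  set Γ₀ : Submodule ℂ V := Γ.comap V.subtype with hΓ₀
  have hsub : ⇑V.subtype = (Subtype.val : V → W) := rfl
  have hM'c : IsClosed (M' : Set V) := hM.preimage continuous_subtype_val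
  have hN'c : IsClosed (N' : Set V) := hN.preimage continuous_subtype_val
  have hΓ₀c : IsClosed (Γ₀ : Set V) := hΓ.preimage continuous_subtype_val
  have hΓN' : Γ₀ ≤ N' := fun x hx => hΓN hx
  have hc : IsCompl M' N' := by
    constructor
    · rw [disjoint_iff, eq_bot_iff]
      rintro x ⟨hx1, hx2⟩
      have : (x : W) ∈ M ⊓ N := ⟨hx1, hx2⟩
      rw [hd] at this
      exact Subtype.ext ((Submodule.mem_bot ℂ).1 this)
    · rw [codisjoint_iff, eq_top_iff]
      rintro x -
      obtain ⟨m, hm, n, hn, hmn⟩ := Submodule.mem_sup.1 x.2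
      refine Submodule.mem_sup.2 ⟨⟨m, Submodule.mem_sup_left hm⟩, hm,
        ⟨n, Submodule.mem_sup_right hn⟩, hn, Subtype.ext ?_⟩
      exact hmn
  have hclosed : IsClosed ((M' ⊔ Γ₀ : Submodule ℂ V) : Set V) :=
    aux_isClosed_sup_of_isCompl M' N' Γ₀ hM'c hN'c hΓ₀c hΓN' hc
  have hmap : (M' ⊔ Γ₀).map V.subtype = M ⊔ Γ := by
    rw [Submodule.map_sup, Submodule.map_comap_subtype, Submodule.map_comap_subtype,
      inf_eq_right.2 (le_sup_left : M ≤ V), inf_eq_right.2 (hΓN.trans le_sup_right)]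
  have hset : ((M ⊔ Γ : Submodule ℂ W) : Set W)
      = (Subtype.val : V → W) '' ((M' ⊔ Γ₀ : Submodule ℂ V) : Set V) := by
    rw [← hmap, Submodule.map_coe, hsub]
  rw [hset]
  exact hMN.isClosedEmbedding_subtypeVal.isClosedMap _ hclosed

lemma aux_isClosed_sup' (M N Γ : Submodule ℂ W)
    (hM : IsClosed (M : Set W)) (hN : IsClosed (N : Set W)) (hΓ : IsClosed (Γ : Set W))
    (hΓN : Γ ≤ N) (hfd : FiniteDimensional ℂ ↥(M ⊓ N))
    (hMN : IsClosed ((M ⊔ N : Submodule ℂ W) : Set W)) :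
    IsClosed ((M ⊔ Γ : Submodule ℂ W) : Set W) := by
  haveI := hfd
  set F : Submodule ℂ W := M ⊓ N with hF
  set M₁ : Submodule ℂ W := M ⊓ Fᗮ with hM₁
  have hM₁c : IsClosed (M₁ : Set W) := by
    rw [hM₁, Submodule.coe_inf]
    exact hM.inter F.isClosed_orthogonal
  haveI : CompleteSpace F := FiniteDimensional.complete ℂ F
  have hMeq : F ⊔ M₁ = M := by
    refine le_antisymm (sup_le inf_le_left inf_le_left) (fun x hx => ?_)
    obtain ⟨y, hy, z, hz, hxyz⟩ := F.exists_add_mem_mem_orthogonal x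
    have hzM : z ∈ M := by
      have : z = x - y := by rw [hxyz]; abel
      rw [this]
      exact Submodule.sub_mem M hx hy.1
    exact hxyz ▸ Submodule.add_mem_sup hy ⟨hzM, hz⟩
  have hM₁N : M₁ ⊓ N = ⊥ := by
    rw [eq_bot_iff]
    rintro x ⟨⟨hxM, hxF⟩, hxN⟩
    have h0 : (inner ℂ x x : ℂ) = 0 := by
      exact Submodule.inner_right_of_mem_orthogonal (K := F) ⟨hxM, hxN⟩ hxF
    exact (Submodule.mem_bot ℂ).2 (inner_self_eq_zero.1 h0)
  have hM₁supN : M₁ ⊔ N = M ⊔ N := by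
    refine le_antisymm (sup_le_sup_right inf_le_left N) (sup_le ?_ le_sup_right)
    calc M = F ⊔ M₁ := hMeq.symm
    _ ≤ N ⊔ M₁ := sup_le_sup_right inf_le_right M₁
    _ ≤ M₁ ⊔ N := by rw [sup_comm]
  have h1 : IsClosed ((M₁ ⊔ Γ : Submodule ℂ W) : Set W) :=
    aux_isClosed_sup M₁ N Γ hM₁c hN hΓ hΓN hM₁N (hM₁supN ▸ hMN)
  have h2 : M ⊔ Γ = (M₁ ⊔ Γ) ⊔ F := by
    rw [← hMeq]; rw [sup_comm F M₁, sup_assoc, sup_assoc, sup_comm Γ F]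
  rw [h2]
  exact aux_isClosed_sup_findim (M₁ ⊔ Γ) F h1 inferInstance

lemma aux_exists_between (Γ Γ' M : Submodule ℂ W)
    (hΓ : IsClosed (Γ : Set W)) (hΓ' : IsClosed (Γ' : Set W)) (hle : Γ ≤ Γ')
    (hMG : IsClosed ((M ⊔ Γ : Submodule ℂ W) : Set W)) :
    ∃ N : Submodule ℂ W, IsClosed (N : Set W) ∧ Γ ≤ N ∧ N ≤ Γ' ∧
      M ⊓ N = M ⊓ Γ ∧ M ⊔ N = M ⊔ Γ' := by
  haveI : CompleteSpace Γ := hΓ.completeSpace_coe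
  set L : Submodule ℂ W := (M ⊔ Γ) ⊓ (Γ' ⊓ Γᗮ) with hLdef
  have hL : IsClosed (L : Set W) := by
    rw [hLdef, Submodule.coe_inf, Submodule.coe_inf]
    exact hMG.inter (hΓ'.inter Γ.isClosed_orthogonal)
  haveI : CompleteSpace L := hL.completeSpace_coe
  set N : Submodule ℂ W := Γ' ⊓ Lᗮ with hNdef
  have hN : IsClosed (N : Set W) := by
    rw [hNdef, Submodule.coe_inf]
    exact hΓ'.inter L.isClosed_orthogonal
  have hΓL : ∀ g ∈ Γ, g ∈ Lᗮ := by
    intro g hg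
    rw [Submodule.mem_orthogonal']
    intro u hu
    exact Submodule.inner_right_of_mem_orthogonal hg hu.2.2
  have hΓN : Γ ≤ N := fun g hg => ⟨hle hg, hΓL g hg⟩
  have hNΓ' : N ≤ Γ' := inf_le_left
  refine ⟨N, hN, hΓN, hNΓ', ?_, ?_⟩
  · refine le_antisymm ?_ (le_inf inf_le_left (le_trans inf_le_right hΓN))
    rintro x ⟨hxM, hxΓ', hxL⟩
    obtain ⟨g, hg, b, hb, hx⟩ := Γ.exists_add_mem_mem_orthogonal x
    have hbeq : b = x - g := by rw [hx]; abel
    have hbL : b ∈ L := by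
      refine ⟨?_, ?_, hb⟩
      · rw [hbeq]
        exact Submodule.sub_mem _ (Submodule.mem_sup_left hxM) (Submodule.mem_sup_right hg)
      · rw [hbeq]
        exact Submodule.sub_mem _ hxΓ' (hle hg)
    have hbL' : b ∈ Lᗮ := by
      rw [hbeq]
      exact Submodule.sub_mem _ hxL (hΓL g hg)
    have hb0 : b = 0 := by
      have := Submodule.inner_right_of_mem_orthogonal hbL hbL'
      exact inner_self_eq_zero.1 this
    refine ⟨hxM, ?_⟩
    rw [hx, hb0, add_zero]
    exact hg
  · refine le_antisymm (sup_le le_sup_left (le_trans hNΓ' le_sup_right))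
      (sup_le le_sup_left ?_)
    intro x hx
    obtain ⟨g, hg, b, hb, hxgb⟩ := Γ.exists_add_mem_mem_orthogonal x
    have hbΓ' : b ∈ Γ' := by
      have : b = x - g := by rw [hxgb]; abel
      rw [this]
      exact Submodule.sub_mem _ hx (hle hg)
    obtain ⟨l, hl, c, hc, hbc⟩ := L.exists_add_mem_mem_orthogonal b
    have hcN : c ∈ N := by
      refine ⟨?_, hc⟩
      have : c = b - l := by rw [hbc]; abel
      rw [this]
      exact Submodule.sub_mem _ hbΓ' hl.2.1
    have hlMN : l ∈ M ⊔ N := sup_le_sup_left hΓN M hl.1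
    have hgN : g ∈ M ⊔ N := Submodule.mem_sup_right (hΓN hg)
    have hcMN : c ∈ M ⊔ N := Submodule.mem_sup_right hcN
    rw [hxgb, hbc]
    exact Submodule.add_mem _ hgN (Submodule.add_mem _ hlMN hcMN)

theorem aux_statement_13
    {W : Type*} [NormedAddCommGroup W] [InnerProductSpace ℂ W] [CompleteSpace W]
    (Γ Γ' M : Submodule ℂ W)
    (hΓ : IsClosed ((Γ : Submodule ℂ W) : Set W))
    (hΓ' : IsClosed ((Γ' : Submodule ℂ W) : Set W))
    (hle : Γ ≤ Γ')
    (hM : IsClosed ((M : Submodule ℂ W) : Set W)) :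
    ((IsClosed ((M ⊔ Γ : Submodule ℂ W) : Set W) ∧ FiniteDimensional ℂ ↥(M ⊓ Γ)) ∧
      (IsClosed ((M ⊔ Γ' : Submodule ℂ W) : Set W) ∧ FiniteDimensional ℂ (W ⧸ (M ⊔ Γ'))) ↔
      ∃ N : Submodule ℂ W, IsClosed ((N : Submodule ℂ W) : Set W) ∧
        Γ ≤ N ∧ N ≤ Γ' ∧ (IsClosed ((M ⊔ N : Submodule ℂ W) : Set W) ∧
          FiniteDimensional ℂ ↥(M ⊓ N) ∧ FiniteDimensional ℂ (W ⧸ (M ⊔ N)))) ∧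
    ((IsClosed ((M ⊔ Γ : Submodule ℂ W) : Set W) ∧ M ⊓ Γ = ⊥ ∧ M ⊔ Γ' = ⊤) ↔
      ∃ N : Submodule ℂ W, IsClosed ((N : Submodule ℂ W) : Set W) ∧
        Γ ≤ N ∧ N ≤ Γ' ∧ (M ⊓ N = ⊥ ∧ M ⊔ N = ⊤)) := by
  constructor
  · constructor
    · rintro ⟨⟨h1, h2⟩, h3, h4⟩
      obtain ⟨N, hN, hΓN, hNΓ', hinf, hsup⟩ := aux_exists_between Γ Γ' M hΓ hΓ' hle h1
      exact ⟨N, hN, hΓN, hNΓ', by rw [hsup]; exact h3, by rw [hinf]; exact h2,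
        by rw [hsup]; exact h4⟩
    · rintro ⟨N, hN, hΓN, hNΓ', hcl, hfin, hquot⟩
      have hMNle : M ⊔ N ≤ M ⊔ Γ' := sup_le_sup_left hNΓ' M
      refine ⟨⟨?_, ?_⟩, ?_, ?_⟩
      · exact aux_isClosed_sup' M N Γ hM hN hΓ hΓN hfin hcl
      · haveI := hfin
        exact Submodule.finiteDimensional_of_le (inf_le_inf_left M hΓN)
      · exact aux_isClosed_of_le (M ⊔ N) (M ⊔ Γ') hMNle hcl hquot
      · exact aux_findim_quotient (M ⊔ N) (M ⊔ Γ') hMNle hquot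
  · constructor
    · rintro ⟨h1, h2, h3⟩
      obtain ⟨N, hN, hΓN, hNΓ', hinf, hsup⟩ := aux_exists_between Γ Γ' M hΓ hΓ' hle h1
      exact ⟨N, hN, hΓN, hNΓ', by rw [hinf, h2], by rw [hsup, h3]⟩
    · rintro ⟨N, hN, hΓN, hNΓ', hinf, hsup⟩
      refine ⟨?_, ?_, ?_⟩
      · refine aux_isClosed_sup M N Γ hM hN hΓ hΓN hinf ?_
        rw [hsup]
        exact isClosed_univ
      · rw [eq_bot_iff, ← hinf]
        exact inf_le_inf_left M hΓN
      · rw [eq_top_iff, ← hsup]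
        exact sup_le_sup_left hNΓ' M

end AuxStatement13

/-- `M` is Fredholm with respect to `(Γ, Γ')` iff there is a closed
subspace `N` with `Γ ⊆ N ⊆ Γ'` such that `(M, N)` is a Fredholm pair; similarly, `M` is
transversal to `(Γ, Γ')` iff there is a closed subspace `N` with `Γ ⊆ N ⊆ Γ'` such that
`(M, N)` is a transversal pair. -/
theorem statement_13
    {W : Type*} [NormedAddCommGroup W] [InnerProductSpace ℂ W] [CompleteSpace W]
    (Γ Γ' M : Submodule ℂ W)
    (hΓ : IsClosed ((Γ : Submodule ℂ W) : Set W))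
    (hΓ' : IsClosed ((Γ' : Submodule ℂ W) : Set W))
    (hle : Γ ≤ Γ')
    (hM : IsClosed ((M : Submodule ℂ W) : Set W)) :
    (FredholmWrt Γ Γ' M ↔
      ∃ N : Submodule ℂ W, IsClosed ((N : Submodule ℂ W) : Set W) ∧
        Γ ≤ N ∧ N ≤ Γ' ∧ FredholmPair M N) ∧
    (TransversalWrt Γ Γ' M ↔
      ∃ N : Submodule ℂ W, IsClosed ((N : Submodule ℂ W) : Set W) ∧
        Γ ≤ N ∧ N ≤ Γ' ∧ TransversalPair M N) := by
  exact aux_statement_13 Γ Γ' M hΓ hΓ' hle hM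
end
end
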